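/- Let $G$ be a simple, simply connected, compact Lie group of rank $n$ and $C_k=\bigcup_{w\in\widehat{W}_k} w(\overline{A}_0\setminus F_k)$. If $u_1,u_2\in C_k$ satisfy $u_2=w(u_1)$ for some element $w$ of the affine Weyl group $\widehat{W}$, then $w(v_k)=v_k$. -/

import Mathlib

noncomputable section

open Set Pointwise

/-- Axiomatization of the root/affine-Weyl data attached to a simple, simply connected,
compact Lie group `G` of rank `n` with maximal torus `T`: `t` is the Lie algebra of `T`
(in the coordinates `t = iH`, so that roots are real-valued and the alcove walls are the
hyperplanes `α = 2πm`, `m ∈ ℤ`), `Δ` is the set of roots, `simpleRoot` the simple roots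
of a positive system, `highest` the highest root, `W0` the Weyl group, `lattice` the
kernel of `exp|_𝔱` (i.e. `2πi R∨`), `Wa` the affine Weyl group, `v` the vertices of the
closed fundamental alcove, and `refl k` the reflection across the face `F_k` opposite
the vertex `v_k`.  The listed axioms are the standard facts for this situation. -/
structure AffineWeylSetup (n : ℕ) (t : Type*) [NormedAddCommGroup t]
    [InnerProductSpace ℝ t] [FiniteDimensional ℝ t] where
  /-- the set of roots -/
  Δ : Finset (t →ₗ[ℝ] ℝ)
  /-- the simple roots `α_1, …, α_n` -/
  simpleRoot : Fin n → (t →ₗ[ℝ] ℝ)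
  /-- the highest root `α_0` -/
  highest : t →ₗ[ℝ] ℝ
  /-- the Weyl group `W = W(G, 𝔱)` -/
  W0 : Subgroup (t ≃ₗ[ℝ] t)
  /-- the lattice `ker (exp|_𝔱) = 2πi R∨` -/
  lattice : AddSubgroup t
  /-- the affine Weyl group `Ŵ` -/
  Wa : Subgroup (t ≃ᵃ[ℝ] t)
  /-- the vertices `v_0, …, v_n` of the closed fundamental alcove -/
  v : Fin (n + 1) → t
  /-- the coroot `h_{α_0}` -/
  corootHighest : t
  /-- the coroots `h_{α_1}, …, h_{α_n}` -/
  coroot : Fin n → t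
  /-- the reflections `r_0, …, r_n` across the faces of the fundamental alcove -/
  refl : Fin (n + 1) → (t ≃ᵃ[ℝ] t)
  rank_eq : Module.finrank ℝ t = n
  simple_mem : ∀ j, simpleRoot j ∈ Δ
  highest_mem : highest ∈ Δ
  neg_mem : ∀ α ∈ Δ, -α ∈ Δ
  simple_indep : LinearIndependent ℝ simpleRoot
  /-- `α_0 = ∑ m_j α_j` with `m_j ≥ 1` -/
  highest_eq : ∃ m : Fin n → ℕ, (∀ j, 1 ≤ m j) ∧ highest = ∑ j, (m j : ℝ) • simpleRoot j
  /-- the Weyl group permutes the roots -/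
  W0_roots : ∀ w ∈ W0, ∀ α ∈ Δ, α ∘ₗ (w : t →ₗ[ℝ] t) ∈ Δ
  /-- `Ŵ` consists precisely of the transformations `x ↦ w x + z`, `w ∈ W`,
  `z ∈ ker (exp|_𝔱)` -/
  Wa_mem_iff : ∀ g : t ≃ᵃ[ℝ] t, g ∈ Wa ↔ ∃ w ∈ W0, ∃ z ∈ lattice, ∀ x, g x = w x + z
  /-- since `G` is simply connected, `ker (exp|_𝔱) = 2πi R∨` is generated by the
  (2π-rescaled) simple coroots -/
  lattice_eq : lattice = AddSubgroup.closure ((2 * Real.pi) • Set.range coroot)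
  v_zero : v 0 = 0
  /-- `α_0 (v_k) = 2π` for `1 ≤ k ≤ n` -/
  v_succ_highest : ∀ k : Fin n, highest (v k.succ) = 2 * Real.pi
  /-- `α_j (v_k) = 0` for `1 ≤ j,k ≤ n` with `j ≠ k` -/
  v_succ_simple : ∀ k j : Fin n, j ≠ k → simpleRoot j (v k.succ) = 0
  coroot_highest_norm : highest corootHighest = 2
  coroot_norm : ∀ j, simpleRoot j (coroot j) = 2
  /-- `r_0 (x) = x - (α_0(x) - 2π) h_{α_0}` -/
  refl_zero : ∀ x, refl 0 x = x - (highest x - 2 * Real.pi) • corootHighest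
  /-- `r_k (x) = x - α_k(x) h_{α_k}` for `1 ≤ k ≤ n` -/
  refl_succ : ∀ (j : Fin n) (x : t), refl j.succ x = x - simpleRoot j x • coroot j
  refl_mem : ∀ k, refl k ∈ Wa
  /-- the closure of the fundamental alcove is a fundamental domain: every point is
  `Ŵ`-conjugate to a point of it … -/
  fund_exists : ∀ x : t, ∃ g ∈ Wa,
    g x ∈ closure {y | highest y < 2 * Real.pi ∧ ∀ j, 0 < simpleRoot j y}
  /-- … and `Ŵ`-conjugate points of it are equal -/
  fund_unique : ∀ x ∈ closure {y | highest y < 2 * Real.pi ∧ ∀ j, 0 < simpleRoot j y},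
    ∀ g ∈ Wa, g x ∈ closure {y | highest y < 2 * Real.pi ∧ ∀ j, 0 < simpleRoot j y} →
      g x = x

namespace AffineWeylSetup

variable {n : ℕ} {t : Type*} [NormedAddCommGroup t] [InnerProductSpace ℝ t]
  [FiniteDimensional ℝ t] (s : AffineWeylSetup n t)

/-- The set of regular points: the complement of the alcove walls. -/
def regular : Set t := {x | ∀ α ∈ s.Δ, ∀ m : ℤ, α x ≠ 2 * Real.pi * m}

/-- The alcoves: the connected components of the set of regular points. -/
def IsAlcove (A : Set t) : Prop := ∃ x ∈ s.regular, A = connectedComponentIn s.regular x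

/-- The open fundamental alcove `A_0`. -/
def A0 : Set t := {x | s.highest x < 2 * Real.pi ∧ ∀ j, 0 < s.simpleRoot j x}

/-- The closed fundamental alcove `A̅_0`. -/
def A0cl : Set t := closure s.A0

/-- The face `F_k` of the closed fundamental alcove opposite to the vertex `v_k`. -/
def face (k : Fin (n + 1)) : Set t :=
  if h : k = 0 then {x | s.highest x = 2 * Real.pi ∧ ∀ j, 0 ≤ s.simpleRoot j x}
  else {x | s.highest x ≤ 2 * Real.pi ∧ (∀ j : Fin n, j.succ ≠ k → 0 ≤ s.simpleRoot j x) ∧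
    s.simpleRoot (k.pred h) x = 0}

/-- The stabilizer `Ŵ_k = {w ∈ Ŵ | w (v_k) = v_k}` of the vertex `v_k`. -/
def stab (k : Fin (n + 1)) : Subgroup (t ≃ᵃ[ℝ] t) where
  carrier := {g | g ∈ s.Wa ∧ g (s.v k) = s.v k}
  one_mem' := ⟨s.Wa.one_mem, rfl⟩
  mul_mem' := by
    rintro a b ⟨haW, ha⟩ ⟨hbW, hb⟩
    refine ⟨s.Wa.mul_mem haW hbW, ?_⟩
    show a (b (s.v k)) = s.v k
    rw [hb, ha]
  inv_mem' := by
    rintro a ⟨haW, ha⟩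
    refine ⟨s.Wa.inv_mem haW, ?_⟩
    show a.symm (s.v k) = s.v k
    conv_lhs => rw [← ha]
    exact a.symm_apply_apply _

/-- The cell `C_k = ⋃_{w ∈ Ŵ_k} w (A̅_0 \ F_k)`. -/
def cell (k : Fin (n + 1)) : Set t :=
  ⋃ w ∈ s.stab k, (w : t ≃ᵃ[ℝ] t) '' (s.A0cl \ s.face k)

end AffineWeylSetup

/-!
Conjugating by elements of `Ŵ_k`, the hypothesis yields `g ∈ Ŵ` mapping a point `x ∈ A̅_0 \ F_k`
into `A̅_0`, so `g` fixes `x` because `A̅_0` is a fundamental domain. The stabilizer of `x` is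
generated by the reflections in the walls of `A̅_0` through `x`; as `x ∉ F_k`, these are walls
other than `F_k`, and all of them contain `v_k`.

Generation is proved by a closest-point argument. Let `H` be the group generated by those
reflections, fix an `H`-invariant inner product, and pick `a ∈ A_0` close to `x`. A point of the
`H`-orbit of `g a` closest to `a` lies on the same side as `a` of every wall through `x` (otherwise
reflecting it would bring it closer), and near `x` the other walls are not crossed; so it lies in
`A̅_0`, hence equals `a`. Thus `h g` fixes `a` for some `h ∈ H`, and an element of `Ŵ` fixing a
point of `A_0` is trivial.
-/

namespace AffineEquiv

variable {k V : Type*} [Ring k] [AddCommGroup V] [Module k V]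

theorem linear_sub (e : V ≃ᵃ[k] V) (y p : V) : e.linear (y - p) = e y - e p := by
  simpa using (e : V →ᵃ[k] V).linearMap_vsub y p

def stabilizer (p : V) : Subgroup (V ≃ᵃ[k] V) where
  carrier := {g | g p = p}
  one_mem' := rfl
  mul_mem' {a b} ha hb := by simp_all [coe_mul]
  inv_mem' {a} ha := by simp_all [inv_def, symm_apply_eq]

end AffineEquiv

section AverageInner

open RealInnerProductSpace

variable {V : Type*} [NormedAddCommGroup V] [InnerProductSpace ℝ V]

def Subgroup.avgInner (H : Subgroup (V ≃ᵃ[ℝ] V)) [Fintype H] : LinearMap.BilinForm ℝ V :=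
  ∑ h : H, (innerₗ V).compl₁₂ (h : V ≃ᵃ[ℝ] V).linear.toLinearMap
    (h : V ≃ᵃ[ℝ] V).linear.toLinearMap

namespace Subgroup

variable (H : Subgroup (V ≃ᵃ[ℝ] V)) [Fintype H]

theorem avgInner_apply (u v : V) :
    H.avgInner u v = ∑ h : H, ⟪(h : V ≃ᵃ[ℝ] V).linear u, (h : V ≃ᵃ[ℝ] V).linear v⟫ := by
  simp [avgInner, LinearMap.sum_apply]

theorem avgInner_comm (u v : V) : H.avgInner u v = H.avgInner v u := by
  simp only [avgInner_apply, real_inner_comm]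

theorem avgInner_self_pos {u : V} (hu : u ≠ 0) : 0 < H.avgInner u u := by
  rw [avgInner_apply]
  refine Finset.sum_pos' (fun h _ => real_inner_self_nonneg) ⟨1, Finset.mem_univ _, ?_⟩
  change 0 < ⟪u, u⟫
  exact real_inner_self_pos.2 hu

theorem avgInner_linear {r : V ≃ᵃ[ℝ] V} (hr : r ∈ H) (u v : V) :
    H.avgInner (r.linear u) (r.linear v) = H.avgInner u v := by
  simp only [avgInner_apply]
  exact Fintype.sum_equiv (Equiv.mulRight ⟨r, hr⟩) _ _ fun h => rfl

end Subgroup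

end AverageInner

theorem LinearMap.BilinForm.apply_add_smul_self_of_reflection_invariant {V : Type*}
    [AddCommGroup V] [Module ℝ V] (B : LinearMap.BilinForm ℝ V) (hB : ∀ u v, B u v = B v u)
    (ℓ : V →ₗ[ℝ] ℝ) {d : V} (hd : ℓ d = -2) (hinv : ∀ u v, B (u + ℓ u • d) (v + ℓ v • d) = B u v)
    (u : V) (c : ℝ) : B (u + c • d) (u + c • d) = B u u + c * (c - ℓ u) * B d d := by
  have hud : B u d = -(ℓ u / 2) * B d d := by
    have h := hinv u d
    simp only [hd, map_add, map_smul, LinearMap.add_apply, LinearMap.smul_apply, smul_eq_mul] at h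
    linear_combination -h / 2
  simp only [map_add, map_smul, LinearMap.add_apply, LinearMap.smul_apply, smul_eq_mul, hB d u, hud]
  ring

namespace AffineWeylSetup

open Filter Topology

variable {n : ℕ} {t : Type*} [NormedAddCommGroup t] [InnerProductSpace ℝ t]
  [FiniteDimensional ℝ t] (s : AffineWeylSetup n t)

/-- `wallFun 0 = 2π - α_0` and `wallFun j.succ = α_j` are the affine functionals whose
nonnegativity cuts out `A̅_0`; `wallLin` are their linear parts. -/
def wallLin (i : Fin (n + 1)) : t →ₗ[ℝ] ℝ := Fin.cases (-s.highest) s.simpleRoot i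

def wallFun (i : Fin (n + 1)) (y : t) : ℝ :=
  s.wallLin i y + Fin.cases (2 * Real.pi) (fun _ => 0) i

def wallDir (i : Fin (n + 1)) : t := Fin.cases s.corootHighest (fun j => -s.coroot j) i

theorem wallFun_zero (y : t) : s.wallFun 0 y = 2 * Real.pi - s.highest y := by
  simp only [wallFun, wallLin, Fin.cases_zero, LinearMap.neg_apply]
  ring

theorem wallFun_succ (j : Fin n) (y : t) : s.wallFun j.succ y = s.simpleRoot j y := by
  simp [wallFun, wallLin]

theorem wallLin_sub (i : Fin (n + 1)) (y z : t) :
    s.wallLin i (y - z) = s.wallFun i y - s.wallFun i z := by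
  simp only [wallFun, map_sub]
  ring

theorem wallFun_add_smul_add_smul (i : Fin (n + 1)) (y z : t) {p q : ℝ} (hpq : p + q = 1) :
    s.wallFun i (p • y + q • z) = p * s.wallFun i y + q * s.wallFun i z := by
  obtain ⟨C, hC⟩ : ∃ C, ∀ y, s.wallFun i y = s.wallLin i y + C := ⟨_, fun _ => rfl⟩
  simp only [hC, map_add, map_smul, smul_eq_mul]
  linear_combination -C * hpq

theorem continuous_wallFun (i : Fin (n + 1)) : Continuous (s.wallFun i) :=
  (s.wallLin i).continuous_of_finiteDimensional.add continuous_const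

theorem wallLin_wallDir (i : Fin (n + 1)) : s.wallLin i (s.wallDir i) = -2 := by
  cases i using Fin.cases <;>
    simp [wallLin, wallDir, s.coroot_highest_norm, s.coroot_norm]

theorem wallDir_ne_zero (i : Fin (n + 1)) : s.wallDir i ≠ 0 := fun h => by
  simpa [h] using s.wallLin_wallDir i

theorem refl_apply (i : Fin (n + 1)) (y : t) : s.refl i y = y + s.wallFun i y • s.wallDir i := by
  cases i using Fin.cases with
  | zero =>
    rw [s.refl_zero, s.wallFun_zero, wallDir, Fin.cases_zero, sub_eq_add_neg, ← neg_smul, neg_sub]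
  | succ j =>
    rw [s.refl_succ, s.wallFun_succ, wallDir, Fin.cases_succ, smul_neg, sub_eq_add_neg]

theorem refl_linear_apply (i : Fin (n + 1)) (u : t) :
    (s.refl i).linear u = u + s.wallLin i u • s.wallDir i := by
  rw [← sub_zero u, AffineEquiv.linear_sub, s.refl_apply, s.refl_apply, s.wallLin_sub]
  simp only [sub_smul]
  abel

theorem refl_apply_of_wallFun_eq_zero {i : Fin (n + 1)} {y : t} (h : s.wallFun i y = 0) :
    s.refl i y = y := by
  rw [s.refl_apply, h, zero_smul, add_zero]

theorem wallFun_v {i k : Fin (n + 1)} (h : i ≠ k) : s.wallFun i (s.v k) = 0 := by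
  cases i using Fin.cases with
  | zero =>
    cases k using Fin.cases with
    | zero => exact absurd rfl h
    | succ l => rw [s.wallFun_zero, s.v_succ_highest l, sub_self]
  | succ j =>
    rw [s.wallFun_succ]
    cases k using Fin.cases with
    | zero => rw [s.v_zero, map_zero]
    | succ l => exact s.v_succ_simple l j fun hjl => h (by rw [hjl])

theorem mem_A0_iff {y : t} : y ∈ s.A0 ↔ ∀ i, 0 < s.wallFun i y := by
  simp only [A0, Set.mem_ofPred_eq, Fin.forall_fin_succ, wallFun_zero, wallFun_succ, sub_pos]

theorem isOpen_A0 : IsOpen s.A0 := by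
  have h : s.A0 = ⋂ i, s.wallFun i ⁻¹' Set.Ioi 0 := by ext; simp [s.mem_A0_iff]
  rw [h]
  exact isOpen_iInter_of_finite fun i => isOpen_Ioi.preimage (s.continuous_wallFun i)

theorem A0_nonempty : s.A0.Nonempty := by
  obtain ⟨g, -, hg⟩ := s.fund_exists 0
  exact closure_nonempty_iff.1 ⟨_, hg⟩

theorem mem_A0cl_iff {y : t} : y ∈ s.A0cl ↔ ∀ i, 0 ≤ s.wallFun i y := by
  constructor
  · have hclosed : IsClosed (⋂ i, s.wallFun i ⁻¹' Set.Ici 0) :=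
      isClosed_iInter fun i => isClosed_Ici.preimage (s.continuous_wallFun i)
    intro hy
    simpa using closure_minimal (fun z hz => by simpa using fun i => ((s.mem_A0_iff).1 hz i).le)
      hclosed hy
  · intro hy
    obtain ⟨a, ha⟩ := s.A0_nonempty
    have hseg : openSegment ℝ a y ⊆ s.A0 := by
      rintro _ ⟨p, q, hp, hq, hpq, rfl⟩
      refine s.mem_A0_iff.2 fun i => ?_
      rw [s.wallFun_add_smul_add_smul i a y hpq]
      have := s.mem_A0_iff.1 ha i
      have := hy i
      positivity
    exact closure_mono hseg (segment_subset_closure_openSegment (right_mem_segment ℝ a y))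

theorem eq_zero_of_forall_simpleRoot_eq_zero {y : t} (h : ∀ j, s.simpleRoot j y = 0) : y = 0 := by
  have hspan : Submodule.span ℝ (Set.range s.simpleRoot) = ⊤ :=
    s.simple_indep.span_eq_top_of_card_eq_finrank' (by
      rw [Fintype.card_fin, Subspace.dual_finrank_eq, s.rank_eq])
  have heval : Module.Dual.eval ℝ t y = 0 :=
    LinearMap.ext_on_range hspan fun j => h j
  exact (Module.forall_dual_apply_eq_zero_iff ℝ y).1 fun φ => LinearMap.congr_fun heval φ

/-- `W` acts faithfully on the finite set of roots. -/
theorem finite_W0 : Finite s.W0 := by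
  refine Finite.of_injective (fun (w : s.W0) (α : s.Δ) =>
    (⟨α.1 ∘ₗ (w.1 : t →ₗ[ℝ] t), s.W0_roots w.1 w.2 α.1 α.2⟩ : s.Δ)) fun w w' hww' => ?_
  refine Subtype.ext (LinearEquiv.ext fun y => sub_eq_zero.1 ?_)
  refine s.eq_zero_of_forall_simpleRoot_eq_zero fun j => ?_
  have h := congrArg (fun α : s.Δ => α.1 y) (congrFun hww' ⟨_, s.simple_mem j⟩)
  simpa [sub_eq_zero] using h

theorem linear_mem_W0 {g : t ≃ᵃ[ℝ] t} (hg : g ∈ s.Wa) : g.linear ∈ s.W0 := by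
  obtain ⟨w, hw, z, -, hgw⟩ := (s.Wa_mem_iff g).1 hg
  convert hw
  ext u
  rw [← sub_zero u, AffineEquiv.linear_sub, hgw, hgw]
  simp

theorem finite_Wa_inf_stabilizer (p : t) : Finite ↥(s.Wa ⊓ AffineEquiv.stabilizer p) := by
  have := s.finite_W0
  refine Finite.of_injective (fun g : ↥(s.Wa ⊓ AffineEquiv.stabilizer p) =>
    (⟨g.1.linear, s.linear_mem_W0 g.2.1⟩ : s.W0)) fun g g' hgg' => ?_
  have hlin : g.1.linear = g'.1.linear := congrArg Subtype.val hgg'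
  refine Subtype.ext (AffineEquiv.toAffineMap_injective (AffineMap.ext_linear (p := p) ?_ ?_))
  · simpa using hlin
  · have hgp : g.1 p = p := (Subgroup.mem_inf.1 g.2).2
    have hgp' : g'.1 p = p := (Subgroup.mem_inf.1 g'.2).2
    simp [hgp, hgp']

/-- By the fundamental-domain property such a `g` fixes a neighbourhood of `a`. -/
theorem eq_one_of_apply_eq_of_mem_A0 {a : t} (ha : a ∈ s.A0) {g : t ≃ᵃ[ℝ] t} (hg : g ∈ s.Wa)
    (hga : g a = a) : g = 1 := by
  set U := s.A0 ∩ g ⁻¹' s.A0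
  have hU : IsOpen U := s.isOpen_A0.inter (s.isOpen_A0.preimage g.continuous_of_finiteDimensional)
  have hfix : Set.EqOn (g : t →ᵃ[ℝ] t) (AffineMap.id ℝ t) U := fun y hy =>
    s.fund_unique y (subset_closure hy.1) g hg (subset_closure hy.2)
  refine AffineEquiv.toAffineMap_injective (AffineMap.ext_on (hU.affineSpan_eq_top ?_) hfix)
  exact ⟨a, ha, by simpa [hga] using ha⟩

def wallReflGroup (x : t) : Subgroup (t ≃ᵃ[ℝ] t) :=
  Subgroup.closure {r | ∃ i, s.wallFun i x = 0 ∧ s.refl i = r}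

theorem refl_mem_wallReflGroup {x : t} {i : Fin (n + 1)} (h : s.wallFun i x = 0) :
    s.refl i ∈ s.wallReflGroup x :=
  Subgroup.subset_closure ⟨i, h, rfl⟩

theorem wallReflGroup_le_Wa_inf_stabilizer (x : t) :
    s.wallReflGroup x ≤ s.Wa ⊓ AffineEquiv.stabilizer x :=
  (Subgroup.closure_le _).2 <| by
    rintro _ ⟨i, hi, rfl⟩
    exact ⟨s.refl_mem i, s.refl_apply_of_wallFun_eq_zero hi⟩

theorem wallReflGroup_le_stab {x : t} {k : Fin (n + 1)} (hk : 0 < s.wallFun k x) :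
    s.wallReflGroup x ≤ s.stab k :=
  (Subgroup.closure_le _).2 <| by
    rintro _ ⟨i, hi, rfl⟩
    refine ⟨s.refl_mem i, s.refl_apply_of_wallFun_eq_zero (s.wallFun_v ?_)⟩
    rintro rfl
    exact hk.ne' hi

theorem finite_wallReflGroup (x : t) : Finite (s.wallReflGroup x) :=
  have := s.finite_Wa_inf_stabilizer x
  Finite.of_injective _ (Subgroup.inclusion_injective (s.wallReflGroup_le_Wa_inf_stabilizer x))

theorem avgInner_refl_sub {H : Subgroup (t ≃ᵃ[ℝ] t)} [Fintype H] {i : Fin (n + 1)}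
    (hi : s.refl i ∈ H) (a b : t) :
    H.avgInner (s.refl i b - a) (s.refl i b - a) = H.avgInner (b - a) (b - a) +
      s.wallFun i b * s.wallFun i a * H.avgInner (s.wallDir i) (s.wallDir i) := by
  have hinv : ∀ u v, H.avgInner (u + s.wallLin i u • s.wallDir i) (v + s.wallLin i v • s.wallDir i)
      = H.avgInner u v := fun u v => by
    rw [← s.refl_linear_apply, ← s.refl_linear_apply, H.avgInner_linear hi]
  have hrb : s.refl i b - a = (b - a) + s.wallFun i b • s.wallDir i := by
    rw [s.refl_apply]
    abel
  rw [hrb, H.avgInner.apply_add_smul_self_of_reflection_invariant H.avgInner_comm (s.wallLin i)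
    (s.wallLin_wallDir i) hinv, s.wallLin_sub]
  ring

theorem exists_apply_mem_A0cl {x a y : t} (hx : x ∈ s.A0cl) (ha : a ∈ s.A0)
    (hy : ∀ h ∈ s.wallReflGroup x, ∀ i, 0 < s.wallFun i x → 0 < s.wallFun i (h y)) :
    ∃ h ∈ s.wallReflGroup x, h y ∈ s.A0cl := by
  classical
  set H := s.wallReflGroup x
  have := s.finite_wallReflGroup x
  let _ : Fintype H := Fintype.ofFinite H
  obtain ⟨_, horbit, hmin⟩ := (Finset.univ.image fun h : H => (h : t ≃ᵃ[ℝ] t) y).exists_min_image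
    (fun b => H.avgInner (b - a) (b - a)) (Finset.univ_nonempty.image _)
  obtain ⟨f, -, rfl⟩ := Finset.mem_image.1 horbit
  refine ⟨f, f.2, s.mem_A0cl_iff.2 fun i => ?_⟩
  by_contra! hneg
  have hix : s.wallFun i x = 0 :=
    le_antisymm (not_lt.1 fun hpos => hneg.not_ge (hy f f.2 i hpos).le) (s.mem_A0cl_iff.1 hx i)
  have hr := s.refl_mem_wallReflGroup hix
  have hle := hmin (s.refl i ((f : t ≃ᵃ[ℝ] t) y))
    (Finset.mem_image.2 ⟨⟨_, hr⟩ * f, Finset.mem_univ _, rfl⟩)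
  have hcloser := mul_neg_of_neg_of_pos (mul_neg_of_neg_of_pos hneg (s.mem_A0_iff.1 ha i))
    (H.avgInner_self_pos (s.wallDir_ne_zero i))
  linarith [s.avgInner_refl_sub hr a ((f : t ≃ᵃ[ℝ] t) y)]

theorem exists_mem_A0_forall_wallFun_pos {x : t} (hx : x ∈ s.A0cl) {ι : Type*} [Finite ι]
    (f : ι → t ≃ᵃ[ℝ] t) (hf : ∀ j, f j x = x) :
    ∃ a ∈ s.A0, ∀ j i, 0 < s.wallFun i x → 0 < s.wallFun i (f j a) := by
  have hev : ∀ᶠ y in 𝓝 x, ∀ j i, 0 < s.wallFun i x → 0 < s.wallFun i (f j y) := by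
    refine eventually_all.2 fun j => eventually_all.2 fun i => ?_
    by_cases hi : 0 < s.wallFun i x
    · have hcont : Continuous fun y => s.wallFun i (f j y) :=
        (s.continuous_wallFun i).comp (f j).continuous_of_finiteDimensional
      have hpos : 0 < s.wallFun i (f j x) := by rwa [hf j]
      exact ((hcont.tendsto x).eventually_const_lt hpos).mono fun y hy _ => hy
    · exact Eventually.of_forall fun y h => absurd h hi
  obtain ⟨a, hay, ha⟩ := (hev.and_frequently (mem_closure_iff_frequently.1 hx)).exists
  exact ⟨a, ha, hay⟩

theorem mem_wallReflGroup_of_apply_eq {x : t} (hx : x ∈ s.A0cl) {g : t ≃ᵃ[ℝ] t} (hg : g ∈ s.Wa)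
    (hgx : g x = x) : g ∈ s.wallReflGroup x := by
  have := s.finite_wallReflGroup x
  have hle := s.wallReflGroup_le_Wa_inf_stabilizer x
  obtain ⟨a, ha, hnear⟩ := s.exists_mem_A0_forall_wallFun_pos hx
    (fun h : s.wallReflGroup x => (h : t ≃ᵃ[ℝ] t) * g) fun h => by
      have hhx : (h : t ≃ᵃ[ℝ] t) x = x := (hle h.2).2
      simp [AffineEquiv.coe_mul, hgx, hhx]
  obtain ⟨f, hf, hfga⟩ := s.exists_apply_mem_A0cl hx ha (y := g a) fun h hh => hnear ⟨h, hh⟩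
  have hfgW : f * g ∈ s.Wa := s.Wa.mul_mem (hle hf).1 hg
  have hfg : f * g = 1 :=
    s.eq_one_of_apply_eq_of_mem_A0 ha hfgW (s.fund_unique a (subset_closure ha) _ hfgW hfga)
  rw [eq_inv_of_mul_eq_one_right hfg]
  exact inv_mem hf

theorem mem_stab_of_apply_eq {x : t} (hx : x ∈ s.A0cl) {k : Fin (n + 1)}
    (hk : 0 < s.wallFun k x) {g : t ≃ᵃ[ℝ] t} (hg : g ∈ s.Wa) (hgx : g x = x) : g ∈ s.stab k :=
  s.wallReflGroup_le_stab hk (s.mem_wallReflGroup_of_apply_eq hx hg hgx)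

theorem wallFun_pos_of_notMem_face {x : t} (hx : x ∈ s.A0cl) {k : Fin (n + 1)}
    (hxk : x ∉ s.face k) : 0 < s.wallFun k x := by
  have h := s.mem_A0cl_iff.1 hx
  refine (h k).lt_of_ne fun hk => hxk ?_
  rw [Fin.forall_fin_succ, wallFun_zero] at h
  simp only [wallFun_succ] at h
  cases k using Fin.cases with
  | zero =>
    rw [wallFun_zero] at hk
    rw [face, dif_pos rfl]
    exact ⟨by linarith, h.2⟩
  | succ j =>
    rw [wallFun_succ] at hk
    rw [face, dif_neg (Fin.succ_ne_zero j), Fin.pred_succ]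
    exact ⟨by linarith [h.1], fun i _ => h.2 i, hk.symm⟩

end AffineWeylSetup

theorem cell_conjugate_points_fix_vertex
    {n : ℕ} {t : Type*} [NormedAddCommGroup t] [InnerProductSpace ℝ t]
    [FiniteDimensional ℝ t] (s : AffineWeylSetup n t) (k : Fin (n + 1)) :
    ∀ u₁ ∈ s.cell k, ∀ u₂ ∈ s.cell k, ∀ w ∈ s.Wa, w u₁ = u₂ → w (s.v k) = s.v k := by
  intro u₁ hu₁ u₂ hu₂ w hw hwu
  simp only [AffineWeylSetup.cell, Set.mem_iUnion₂, Set.mem_image] at hu₁ hu₂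
  obtain ⟨w₁, hw₁, x₁, ⟨hx₁, hx₁k⟩, rfl⟩ := hu₁
  obtain ⟨w₂, hw₂, x₂, ⟨hx₂, -⟩, rfl⟩ := hu₂
  set g := w₂⁻¹ * w * w₁
  have hgW : g ∈ s.Wa := s.Wa.mul_mem (s.Wa.mul_mem (s.Wa.inv_mem hw₂.1) hw) hw₁.1
  have hgx₁ : g x₁ = x₂ := by simp [g, AffineEquiv.coe_mul, AffineEquiv.inv_def, hwu]
  have hgx : g x₁ = x₁ := s.fund_unique x₁ hx₁ g hgW (hgx₁ ▸ hx₂)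
  have hg : g ∈ s.stab k :=
    s.mem_stab_of_apply_eq hx₁ (s.wallFun_pos_of_notMem_face hx₁ hx₁k) hgW hgx
  have hwg : w = w₂ * g * w₁⁻¹ := by simp [g, mul_assoc]
  rw [hwg]
  exact ((s.stab k).mul_mem ((s.stab k).mul_mem hw₂ hg) ((s.stab k).inv_mem hw₁)).2
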